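/- There is no vector v ∈ ℝ³ such that every entry of the row vector vᵀM is strictly positive, where M is the 3×10 real matrix whose columns are (1000, 0, 0), (845, −535, 0), (−98, −991, 94), (−515, −639, 572), (270, −75, 960), (946, −125, 301), (885, 165, −435), (299, 465, −833), (−300, 944, −135), (182, 877, 444). Equivalently, the nonnegative nonzero vector u = (1, 1, 8061667015, 1, 1, 1, 496072961, 2237736971, 3514960071, 4046282755) satisfies M u = 0. -/

import Mathlib

/-- The explicit `3 × 10` matrix from equation (2) of the paper, whose `i`-th column
is `(−1)^{i+1} eᵢ` for the edge vectors of a 10-stick realization of the knot `8₅`. -/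
noncomputable def M85 : Matrix (Fin 3) (Fin 10) ℝ :=
  !![1000, 845, -98, -515, 270, 946, 885, 299, -300, 182;
     0, -535, -991, -639, -75, -125, 165, 465, 944, 877;
     0, 0, 94, 572, 960, 301, -435, -833, -135, 444]

/-- The certificate vector `u`. -/
noncomputable def u85 : Fin 10 → ℝ :=
  ![1, 1, 8061667015, 1, 1, 1, 496072961, 2237736971, 3514960071, 4046282755]

open Matrix

namespace Matrix

theorem not_exists_forall_pos_vecMul_of_mulVec_eq_zero {R m n : Type*} [Semiring R]
    [PartialOrder R] [IsStrictOrderedRing R] [Fintype m] [Fintype n] {A : Matrix m n R}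
    {u : n → R} (hu : 0 ≤ u) (hu0 : u ≠ 0) (hAu : A *ᵥ u = 0) :
    ¬ ∃ v : m → R, ∀ j, 0 < (v ᵥ* A) j := by
  rintro ⟨v, hv⟩
  obtain ⟨j, hj⟩ := Function.ne_iff.mp hu0
  have hpos : 0 < v ᵥ* A ⬝ᵥ u :=
    Finset.sum_pos' (fun i _ => mul_nonneg (hv i).le (hu i))
      ⟨j, Finset.mem_univ j, mul_pos (hv j) ((hu j).lt_of_ne' hj)⟩
  rw [← dotProduct_mulVec, hAu, dotProduct_zero] at hpos
  exact hpos.false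

end Matrix

theorem u85_nonneg : 0 ≤ u85 := by
  intro j
  fin_cases j <;> norm_num [u85]

theorem u85_ne_zero : u85 ≠ 0 :=
  Function.ne_iff.mpr ⟨0, by norm_num [u85]⟩

theorem M85_mulVec_u85 : M85 *ᵥ u85 = 0 := by
  ext i
  fin_cases i <;> norm_num [M85, u85, mulVec, dotProduct, Fin.sum_univ_succ]

theorem no_positive_row_vector_for_8_5 :
    (¬ ∃ v : Fin 3 → ℝ, ∀ j : Fin 10, 0 < Matrix.vecMul v M85 j) ∧
    (u85 ≠ 0 ∧ (∀ j : Fin 10, 0 ≤ u85 j) ∧ M85.mulVec u85 = 0) :=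
  ⟨Matrix.not_exists_forall_pos_vecMul_of_mulVec_eq_zero u85_nonneg u85_ne_zero M85_mulVec_u85,
    u85_ne_zero, u85_nonneg, M85_mulVec_u85⟩
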